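/- arXiv:1604.00306 — 4 statements merged into one kernel-verified Lean document; each statement's English description precedes it below -/
import Mathlib

section
/- Let φ: ℝ^d → ℝ be a nonnegative measurable function with ∫_{ℝ^d} φ(x) dx = 1. Suppose λ₁, λ₂ ∈ (0,1) and μ₁, μ₂ ∈ ℝ^d are such that (1−λ₁)φ(x) + λ₁φ(x−μ₁) = (1−λ₂)φ(x) + λ₂φ(x−μ₂) for Lebesgue-almost every x ∈ ℝ^d, and that μ₁ ≠ 0. Then μ₂ = μ₁ and λ₂ = λ₁ (identifiability of the two-component contamination mixture model). -/
/-!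
Taking Fourier transforms, the hypothesis becomes
`((1 - λ₁) + λ₁ 𝐞(-⟪μ₁, w⟫)) φ̂(w) = ((1 - λ₂) + λ₂ 𝐞(-⟪μ₂, w⟫)) φ̂(w)`.
Since `φ̂` is continuous with `φ̂(0) = 1`, the two factors agree for all `w` near `0`.
Comparing moduli at a small `w` with `𝐞(-⟪μ₁, w⟫) ≠ 1` gives `λ₂ = λ₁`; then
`𝐞(⟪μ₂ - μ₁, w⟫) = 1` for all small `w`, which forces `μ₂ = μ₁`.
-/

open MeasureTheory Filter Topology
open scoped FourierTransform RealInnerProductSpace Real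

theorem Circle.eq_of_one_sub_add_mul_eq {a b : ℝ} {z z' : Circle} (ha : a ≠ 0) (hz : z ≠ 1)
    (h : 1 - a + a * (z : ℂ) = 1 - b + b * (z' : ℂ)) : b = a := by
  have hre := congrArg Complex.re h
  have him := congrArg Complex.im h
  simp only [Complex.add_re, Complex.add_im, Complex.sub_re, Complex.sub_im, Complex.one_re,
    Complex.one_im, Complex.mul_re, Complex.mul_im, Complex.ofReal_re, Complex.ofReal_im,
    zero_mul, sub_zero, add_zero, zero_add, sub_self] at hre him
  have hz₁ := Circle.normSq_coe z
  have hz₂ := Circle.normSq_coe z'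
  rw [Complex.normSq_apply] at hz₁ hz₂
  -- Comparing `|b z'|² = |(b - a) + a z|²` leaves `a (b - a) (1 - Re z) = 0`.
  have key : a * (b - a) * (1 - (z : ℂ).re) = 0 := by
    linear_combination (1/2 : ℝ) * ((-(b * (z' : ℂ).re) - (b - a) - a * (z : ℂ).re) * hre
      + (-(b * (z' : ℂ).im) - a * (z : ℂ).im) * him - b ^ 2 * hz₂ + a ^ 2 * hz₁)
  have hre_ne : (z : ℂ).re ≠ 1 := by
    intro h1
    apply hz
    have him0 : (z : ℂ).im = 0 := by nlinarith
    exact Circle.ext (Complex.ext (by simpa using h1) (by simpa using him0))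
  rcases mul_eq_zero.1 key with hab | h1
  · exact sub_eq_zero.1 ((mul_eq_zero.1 hab).resolve_left ha)
  · exact absurd (sub_eq_zero.1 h1).symm hre_ne

theorem Real.fourierChar_ne_one_of_mem_Ioo {x : ℝ} (hx : x ∈ Set.Ioo 0 1) : 𝐞 x ≠ 1 := by
  rw [Real.fourierChar_apply', ne_eq, Circle.exp_eq_one]
  rintro ⟨n, hn⟩
  have hxn : x = n := by nlinarith [Real.pi_pos]
  obtain ⟨h0, h1⟩ := hx
  rw [hxn] at h0 h1
  have : 0 < n := by exact_mod_cast h0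
  have : n < 1 := by exact_mod_cast h1
  omega

section InnerProductSpace

variable {V : Type*} [NormedAddCommGroup V] [InnerProductSpace ℝ V]

theorem frequently_fourierChar_inner_ne_one {ν : V} (hν : ν ≠ 0) :
    ∃ᶠ w in 𝓝 0, 𝐞 ⟪ν, w⟫ ≠ 1 := by
  -- Along the ray `w = t • ν`, `⟪ν, w⟫ = t ‖ν‖²` runs through `(0, 1)` for small `t > 0`.
  have hν' : 0 < ‖ν‖ ^ 2 := by positivity
  have hray : Tendsto (fun t : ℝ ↦ t • ν) (𝓝[>] 0) (𝓝 0) :=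
    tendsto_nhdsWithin_of_tendsto_nhds
      ((continuous_id.smul continuous_const).tendsto' 0 0 (zero_smul ℝ ν))
  refine hray.frequently (Eventually.frequently ?_)
  filter_upwards [Ioo_mem_nhdsGT (one_div_pos.2 hν')] with t ht
  refine Real.fourierChar_ne_one_of_mem_Ioo ?_
  rw [real_inner_smul_right, real_inner_self_eq_norm_sq]
  exact ⟨mul_pos ht.1 hν', (lt_div_iff₀ hν').1 ht.2⟩

end InnerProductSpace

section Fourier

variable {V E : Type*} [NormedAddCommGroup V] [InnerProductSpace ℝ V] [FiniteDimensional ℝ V]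
  [MeasurableSpace V] [BorelSpace V] [NormedAddCommGroup E] [NormedSpace ℂ E]

theorem Real.fourier_comp_sub_right (f : V → E) (μ w : V) :
    𝓕 (fun x ↦ f (x - μ)) w = 𝐞 (-⟪μ, w⟫) • 𝓕 f w := by
  have := congrFun (VectorFourier.fourierIntegral_comp_add_right 𝐞 volume (innerₗ V) f (-μ)) w
  simp only [Function.comp_def, ← sub_eq_add_neg, innerₗ_apply_apply, inner_neg_left] at this
  exact this

theorem Real.fourier_smul_add_smul_comp_sub_right {f : V → E} (hf : Integrable f) (p q : ℂ)
    (μ w : V) :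
    𝓕 (fun x ↦ p • f x + q • f (x - μ)) w = (p + q * 𝐞 (-⟪μ, w⟫)) • 𝓕 f w := by
  have hfμ : Integrable (fun x ↦ f (x - μ)) := hf.comp_sub_right μ
  have hadd := VectorFourier.fourierIntegral_add (μ := volume) (L := innerₗ V)
    Real.continuous_fourierChar continuous_inner (hf.smul p) (hfμ.smul q)
  rw [VectorFourier.fourierIntegral_const_smul, VectorFourier.fourierIntegral_const_smul] at hadd
  calc 𝓕 (fun x ↦ p • f x + q • f (x - μ)) w
      = p • 𝓕 f w + q • 𝓕 (fun x ↦ f (x - μ)) w := congrFun hadd w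
    _ = (p + q * 𝐞 (-⟪μ, w⟫)) • 𝓕 f w := by
      rw [Real.fourier_comp_sub_right, Circle.smul_def, smul_smul, add_smul]

theorem Real.continuous_fourier {f : V → E} (hf : Integrable f) : Continuous (𝓕 f) :=
  VectorFourier.fourierIntegral_continuous Real.continuous_fourierChar continuous_inner hf

theorem Real.fourier_apply_zero (f : V → E) : 𝓕 f 0 = ∫ x, f x := by
  simp [Real.fourier_eq]

theorem Real.eventually_fourier_ne_zero {f : V → E} (hf : Integrable f) (h : ∫ x, f x ≠ 0) :
    ∀ᶠ w in 𝓝 0, 𝓕 f w ≠ 0 :=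
  (Real.continuous_fourier hf).continuousAt.eventually_ne (by rwa [Real.fourier_apply_zero])

theorem Real.eventually_add_mul_fourierChar_eq_of_ae_eq {f : V → E} (hf : Integrable f)
    (hf_int : ∫ x, f x ≠ 0) {p₁ q₁ p₂ q₂ : ℂ} {μ₁ μ₂ : V}
    (h : (fun x ↦ p₁ • f x + q₁ • f (x - μ₁)) =ᵐ[volume] fun x ↦ p₂ • f x + q₂ • f (x - μ₂)) :
    ∀ᶠ w in 𝓝 0, p₁ + q₁ * 𝐞 (-⟪μ₁, w⟫) = p₂ + q₂ * 𝐞 (-⟪μ₂, w⟫) := by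
  filter_upwards [Real.eventually_fourier_ne_zero hf hf_int] with w hw
  have := Real.fourier_congr_ae h w
  rw [Real.fourier_smul_add_smul_comp_sub_right hf,
    Real.fourier_smul_add_smul_comp_sub_right hf] at this
  exact smul_left_injective ℂ hw this

end Fourier

theorem contamination_mixture_identifiable_general
    (d : ℕ) (φ : EuclideanSpace ℝ (Fin d) → ℝ)
    (hint : ∫ x, φ x = 1)
    (l₁ l₂ : ℝ) (μ₁ μ₂ : EuclideanSpace ℝ (Fin d))
    (hl₁ : l₁ ∈ Set.Ioo (0 : ℝ) 1)
    (hμ₁ : μ₁ ≠ 0)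
    (heq : ∀ᵐ x ∂(volume : Measure (EuclideanSpace ℝ (Fin d))),
      (1 - l₁) * φ x + l₁ * φ (x - μ₁) = (1 - l₂) * φ x + l₂ * φ (x - μ₂)) :
    μ₂ = μ₁ ∧ l₂ = l₁ := by
  have hφ : Integrable φ := by
    by_contra h
    simp [integral_undef h] at hint
  have hf_int : ∫ x, (φ x : ℂ) ≠ 0 := by
    rw [integral_complex_ofReal, hint]
    exact one_ne_zero
  have hchar : ∀ᶠ w in 𝓝 0,
      1 - l₁ + l₁ * (𝐞 (-⟪μ₁, w⟫) : ℂ) = 1 - l₂ + l₂ * (𝐞 (-⟪μ₂, w⟫) : ℂ) := by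
    refine Real.eventually_add_mul_fourierChar_eq_of_ae_eq hφ.ofReal hf_int ?_
    filter_upwards [heq] with x hx
    simp only [smul_eq_mul]
    exact_mod_cast hx
  have hl : l₂ = l₁ := by
    obtain ⟨w, hne, hw⟩ :=
      ((frequently_fourierChar_inner_ne_one (neg_ne_zero.2 hμ₁)).and_eventually hchar).exists
    rw [inner_neg_left] at hne
    exact Circle.eq_of_one_sub_add_mul_eq hl₁.1.ne' hne hw
  refine ⟨by_contra fun hμ ↦ ?_, hl⟩
  obtain ⟨w, hne, hw⟩ :=
    ((frequently_fourierChar_inner_ne_one (sub_ne_zero.2 hμ)).and_eventually hchar).exists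
  rw [hl, _root_.add_right_inj, mul_right_inj' (by exact_mod_cast hl₁.1.ne'), Circle.coe_inj] at hw
  apply hne
  rw [show ⟪μ₂ - μ₁, w⟫ = -⟪μ₁, w⟫ - -⟪μ₂, w⟫ by rw [inner_sub_left]; ring,
    AddChar.map_sub_eq_div, hw, div_self']

/-- Identifiability of the two-component contamination mixture model. -/
theorem contamination_mixture_identifiable
    (d : ℕ) (φ : EuclideanSpace ℝ (Fin d) → ℝ)
    (hmeas : Measurable φ) (hnonneg : ∀ x, 0 ≤ φ x)
    (hint : ∫ x, φ x = 1)
    (l₁ l₂ : ℝ) (μ₁ μ₂ : EuclideanSpace ℝ (Fin d))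
    (hl₁ : l₁ ∈ Set.Ioo (0 : ℝ) 1) (hl₂ : l₂ ∈ Set.Ioo (0 : ℝ) 1)
    (hμ₁ : μ₁ ≠ 0)
    (heq : ∀ᵐ x ∂(volume : Measure (EuclideanSpace ℝ (Fin d))),
      (1 - l₁) * φ x + l₁ * φ (x - μ₁) = (1 - l₂) * φ x + l₂ * φ (x - μ₂)) :
    μ₂ = μ₁ ∧ l₂ = l₁ :=
  contamination_mixture_identifiable_general d φ hint l₁ l₂ μ₁ μ₂ hl₁ hμ₁ heq
end

section
/- Let M > 0, d ≥ 1, and let φ be a probability density on ℝ^d satisfying (H_S) and (H_Lip) on [−M,M]^d. Then there exist constants 0 < κ̲ < κ̄ < ∞ such that for all μ, μ̃ ∈ ℝ^d with μ − μ̃ ∈ [−M,M]^d: κ̲ ‖μ − μ̃‖² ≤ ‖φ_μ − φ_{μ̃}‖₂² ≤ κ̄ ‖μ − μ̃‖². -/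
/-!
The upper bound is the Lipschitz hypothesis integrated. For the lower bound, translate so that
`μ = 0` and argue by contradiction on the compact box: a sequence `uⱼ` with
`‖φ - φ(· - uⱼ)‖₂² = o(‖uⱼ‖²)` has a limit `w`. If `w ≠ 0`, Fatou's lemma makes `φ` periodic
with period `w`; if `w = 0`, Fatou's lemma applied to the difference quotients along a limiting
direction `e` makes the derivative of `φ` in direction `e` vanish, so `φ` is periodic with
period `e`. A continuous nonzero `L²` function has no nonzero period, and `φ ≠ 0` because it
integrates to `1`.
-/

open MeasureTheory ENNReal

noncomputable section

/-- `ℝ^d` with the Euclidean norm. -/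
abbrev Eu (d : ℕ) := EuclideanSpace ℝ (Fin d)

/-- `φ` is a probability density on `ℝ^d`. -/
def IsDensity {d : ℕ} (φ : Eu d → ℝ) : Prop :=
  Measurable φ ∧ (∀ x, 0 ≤ φ x) ∧ ∫ x, φ x = 1

/-- The two-component contamination mixture density `f_{λ,μ} = (1-λ)φ + λφ(·-μ)`. -/
def mix {d : ℕ} (φ : Eu d → ℝ) (l : ℝ) (μ : Eu d) : Eu d → ℝ :=
  fun x => (1 - l) * φ x + l * φ (x - μ)

/-- Assumption (H_S): `φ` is `C³` and belongs to `L²(ℝ^d)`. -/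
def HS {d : ℕ} (φ : Eu d → ℝ) : Prop :=
  ContDiff ℝ 3 φ ∧ MemLp φ 2 volume

/-- Assumption (H_Lip) on `[-M,M]^d`: there is `g ∈ L²` with
`|φ(x) - φ(x-μ)| ≤ ‖μ‖ g(x)` for all `x` and all `μ ∈ [-M,M]^d`, and
`∫ g²/φ < ∞`. -/
def HLipOn {d : ℕ} (φ : Eu d → ℝ) (M : ℝ) : Prop :=
  ∃ g : Eu d → ℝ, MemLp g 2 volume ∧
    (∀ (x μ : Eu d), (∀ j, |μ j| ≤ M) → |φ x - φ (x - μ)| ≤ ‖μ‖ * g x) ∧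
    Integrable (fun x => (g x) ^ 2 / φ x)

open Filter Topology Metric Function

theorem ae_eq_zero_of_tendsto_integral_zero {α : Type*} [MeasurableSpace α] {μ : Measure α}
    {q : ℕ → α → ℝ} {L : α → ℝ} (hnn : ∀ j, 0 ≤ q j) (hint : ∀ j, Integrable (q j) μ)
    (hlim : ∀ x, Tendsto (fun j => q j x) atTop (𝓝 (L x)))
    (h0 : Tendsto (fun j => ∫ x, q j x ∂μ) atTop (𝓝 0)) : L =ᵐ[μ] 0 := by
  have hL : AEMeasurable L μ :=
    aemeasurable_of_tendsto_metrizable_ae' (fun j => (hint j).aemeasurable) (ae_of_all _ hlim)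
  have hlint : ∫⁻ x, ENNReal.ofReal (L x) ∂μ = 0 := by
    refine le_antisymm ?_ zero_le
    calc ∫⁻ x, ENNReal.ofReal (L x) ∂μ
        = ∫⁻ x, liminf (fun j => ENNReal.ofReal (q j x)) atTop ∂μ := by
          simp_rw [(ENNReal.tendsto_ofReal (hlim _)).liminf_eq]
      _ ≤ liminf (fun j => ∫⁻ x, ENNReal.ofReal (q j x) ∂μ) atTop :=
          lintegral_liminf_le' fun j => (hint j).aemeasurable.ennreal_ofReal
      _ = liminf (fun j => ENNReal.ofReal (∫ x, q j x ∂μ)) atTop := by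
          simp_rw [ofReal_integral_eq_lintegral_ofReal (hint _) (ae_of_all _ (hnn _))]
      _ = 0 := by simpa using (ENNReal.tendsto_ofReal h0).liminf_eq
  filter_upwards [(lintegral_eq_zero_iff' hL.ennreal_ofReal).1 hlint] with x hx
  exact le_antisymm (ENNReal.ofReal_eq_zero.1 hx) (ge_of_tendsto' (hlim x) fun j => hnn j x)

section Derivative

variable {E : Type*} [NormedAddCommGroup E] [NormedSpace ℝ E]

theorem HasFDerivAt.tendsto_inv_norm_mul_sub_sub {ι : Type*} {l : Filter ι} {φ : E → ℝ}
    {φ' : E →L[ℝ] ℝ} {x : E} (hφ : HasFDerivAt φ φ' x) {u : ι → E} {e : E}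
    (hu : Tendsto u l (𝓝 0)) (he : Tendsto (fun j => ‖u j‖⁻¹ • u j) l (𝓝 e)) :
    Tendsto (fun j => ‖u j‖⁻¹ * (φ x - φ (x - u j))) l (𝓝 (φ' e)) := by
  have hrem : Tendsto (fun j => (φ (x + -u j) - φ x - φ' (-u j)) / ‖-u j‖) l (𝓝 0) :=
    ((hasFDerivAt_iff_isLittleO_nhds_zero.1 hφ).norm_right.comp_tendsto
      (by simpa using hu.neg)).tendsto_div_nhds_zero
  have hlin : Tendsto (fun j => φ' (‖u j‖⁻¹ • u j)) l (𝓝 (φ' e)) :=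
    (φ'.continuous.tendsto e).comp he
  refine (sub_zero (φ' e) ▸ hlin.sub hrem).congr fun j => ?_
  simp only [map_smul, map_neg, norm_neg, smul_eq_mul, ← sub_eq_add_neg]
  ring

theorem periodic_of_fderiv_apply_eq_zero {F : Type*} [NormedAddCommGroup F] [NormedSpace ℝ F]
    {φ : E → F} (hφ : Differentiable ℝ φ) {e : E} (h : ∀ x, fderiv ℝ φ x e = 0) :
    Periodic φ e := by
  intro x
  have hline : ∀ s : ℝ, HasDerivAt (fun s : ℝ => φ (x + s • e)) 0 s := by
    intro s
    have h' := (hφ _).hasFDerivAt.comp_hasDerivAt s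
      (((hasDerivAt_id s).smul_const e).const_add x)
    simpa [h, Function.comp_def] using h'
  simpa using is_const_of_deriv_eq_zero (fun s => (hline s).differentiableAt)
    (fun s => (hline s).deriv) 1 0

end Derivative

section Shifts

variable {E : Type*} [NormedAddCommGroup E] [MeasurableSpace E] {μ : Measure E}

theorem integral_sq_sub_comp_sub_le {φ g : E → ℝ} (hg : Integrable (fun x => g x ^ 2) μ)
    {ν : E} (hLip : ∀ x, |φ x - φ (x - ν)| ≤ ‖ν‖ * g x) :
    ∫ x, (φ x - φ (x - ν)) ^ 2 ∂μ ≤ ‖ν‖ ^ 2 * ∫ x, g x ^ 2 ∂μ := by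
  rw [← integral_const_mul]
  refine integral_mono_of_nonneg (ae_of_all _ fun x => sq_nonneg _) (hg.const_mul _)
    (ae_of_all _ fun x => ?_)
  dsimp only
  rw [← mul_pow, ← sq_abs]
  exact pow_le_pow_left₀ (abs_nonneg _) (hLip x) 2

variable [BorelSpace E] [μ.IsAddRightInvariant]

theorem integrable_sq_sub_comp_sub {φ : E → ℝ} (hφ : MemLp φ 2 μ) (ν : E) :
    Integrable (fun x => (φ x - φ (x - ν)) ^ 2) μ :=
  (hφ.sub (hφ.comp_measurePreserving (measurePreserving_sub_right μ ν))).integrable_sq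

variable [μ.IsOpenPosMeasure]

theorem periodic_neg_of_tendsto_integral_sq_sub_comp_sub {φ : E → ℝ} (hφ : Continuous φ)
    (hφ2 : MemLp φ 2 μ) {u : ℕ → E} {w : E} (hu : Tendsto u atTop (𝓝 w))
    (hF : Tendsto (fun j => ∫ x, (φ x - φ (x - u j)) ^ 2 ∂μ) atTop (𝓝 0)) :
    Periodic φ (-w) := by
  have hlim : ∀ x, Tendsto (fun j => (φ x - φ (x - u j)) ^ 2) atTop
      (𝓝 ((φ x - φ (x - w)) ^ 2)) :=
    fun x => (tendsto_const_nhds.sub ((hφ.tendsto _).comp (tendsto_const_nhds.sub hu))).pow 2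
  have hzero := (Continuous.ae_eq_iff_eq μ (by fun_prop) continuous_const).1
    (ae_eq_zero_of_tendsto_integral_zero (fun j x => sq_nonneg _)
      (fun j => integrable_sq_sub_comp_sub hφ2 (u j)) hlim hF)
  intro x
  rw [← sub_eq_add_neg]
  exact (sub_eq_zero.1 (pow_eq_zero_iff two_ne_zero |>.1 (congrFun hzero x))).symm

variable [NormedSpace ℝ E]

/-- The translates of a ball on which `f` is positive by multiples of the period are disjoint
and all carry the same mass, so infinitely much mass in total. -/
theorem Function.Periodic.eq_zero_of_integrable {f : E → ℝ} {c : E} (hper : Periodic f c)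
    (hc : c ≠ 0) (hcont : Continuous f) (hnn : 0 ≤ f) (hint : Integrable f μ) : f = 0 := by
  by_contra hf
  obtain ⟨x₀, hx₀⟩ := Function.ne_iff.1 hf
  set B : ℕ → Set E := fun n => ball (x₀ + n • c) (‖c‖ / 2)
  set I := ∫ x in ball x₀ (‖c‖ / 2), f x ∂μ
  have hB : ∀ n, ∫ x in B n, f x ∂μ = I := by
    intro n
    have h := (measurePreserving_add_right μ (n • c)).setIntegral_preimage_emb
      (measurableEmbedding_addRight _) f (B n)
    rw [preimage_add_right_ball, add_sub_cancel_right, funext (hper.nsmul n)] at h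
    exact h.symm
  have hI : 0 < I := by
    rw [setIntegral_pos_iff_support_of_nonneg_ae (ae_of_all _ hnn) hint.integrableOn]
    exact (hcont.isOpen_support.inter isOpen_ball).measure_pos μ
      ⟨x₀, hx₀, mem_ball_self (by positivity)⟩
  have hdisj : Pairwise (Disjoint on B) := by
    intro m n hmn
    apply ball_disjoint_ball
    have h1 : (1 : ℝ) ≤ |(m : ℝ) - n| := by
      exact_mod_cast Int.one_le_abs (sub_ne_zero.2 (Int.ofNat_inj.not.2 hmn))
    rw [dist_add_left, dist_eq_norm, ← Nat.cast_smul_eq_nsmul ℝ, ← Nat.cast_smul_eq_nsmul ℝ,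
      ← sub_smul, norm_smul, Real.norm_eq_abs, add_halves]
    nlinarith [norm_nonneg c]
  have hsum : ∀ N : ℕ, N * I ≤ ∫ x, f x ∂μ := fun N => calc
    N * I = ∑ n ∈ Finset.range N, ∫ x in B n, f x ∂μ := by simp [hB]
    _ = ∫ x in ⋃ n ∈ Finset.range N, B n, f x ∂μ :=
      (integral_biUnion_finset _ (fun n _ => measurableSet_ball) (hdisj.set_pairwise _)
        (fun n _ => hint.integrableOn)).symm
    _ ≤ ∫ x, f x ∂μ := setIntegral_le_integral hint (ae_of_all _ hnn)
  obtain ⟨N, hN⟩ := exists_nat_gt ((∫ x, f x ∂μ) / I)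
  rw [div_lt_iff₀ hI] at hN
  linarith [hsum N]

theorem Function.Periodic.eq_zero_of_memLp_two {f : E → ℝ} {c : E} (hper : Periodic f c)
    (hc : c ≠ 0) (hcont : Continuous f) (hf : MemLp f 2 μ) : f = 0 := by
  have hsq := (hper.comp (· ^ 2)).eq_zero_of_integrable (μ := μ) hc
    ((continuous_pow 2).comp hcont) (fun x => sq_nonneg (f x)) hf.integrable_sq
  funext x
  exact pow_eq_zero_iff two_ne_zero |>.1 (congrFun hsq x)

theorem fderiv_apply_eq_zero_of_tendsto {φ : E → ℝ} (hφ : ContDiff ℝ 1 φ) (hφ2 : MemLp φ 2 μ)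
    {u : ℕ → E} {e : E} (hu : Tendsto u atTop (𝓝 0))
    (he : Tendsto (fun j => ‖u j‖⁻¹ • u j) atTop (𝓝 e))
    (hF : Tendsto (fun j => (∫ x, (φ x - φ (x - u j)) ^ 2 ∂μ) / ‖u j‖ ^ 2) atTop (𝓝 0))
    (x : E) : fderiv ℝ φ x e = 0 := by
  have hlim : ∀ x, Tendsto (fun j => (‖u j‖⁻¹ * (φ x - φ (x - u j))) ^ 2) atTop
      (𝓝 (fderiv ℝ φ x e ^ 2)) := fun x =>
    ((hφ.differentiable one_ne_zero x).hasFDerivAt.tendsto_inv_norm_mul_sub_sub hu he).pow 2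
  have hint : ∀ j, ∫ x, (‖u j‖⁻¹ * (φ x - φ (x - u j))) ^ 2 ∂μ
      = (∫ x, (φ x - φ (x - u j)) ^ 2 ∂μ) / ‖u j‖ ^ 2 := fun j => by
    simp_rw [mul_pow, integral_const_mul, inv_pow, inv_mul_eq_div]
  have hzero := (Continuous.ae_eq_iff_eq μ
      (((hφ.continuous_fderiv one_ne_zero).clm_apply continuous_const).pow 2)
      continuous_const).1
    (ae_eq_zero_of_tendsto_integral_zero (fun j x => sq_nonneg _)
      (fun j => (integrable_sq_sub_comp_sub hφ2 (u j)).const_mul (‖u j‖⁻¹ ^ 2) |>.congr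
        (ae_of_all _ fun x => (mul_pow _ _ 2).symm)) hlim (by simpa only [hint] using hF))
  exact pow_eq_zero_iff two_ne_zero |>.1 (congrFun hzero x)

variable [ProperSpace E]

theorem exists_ne_zero_periodic_of_tendsto {φ : E → ℝ} (hφ : ContDiff ℝ 1 φ)
    (hφ2 : MemLp φ 2 μ) {K : Set E} (hK : IsCompact K) {u : ℕ → E} (huK : ∀ j, u j ∈ K)
    (hu0 : ∀ j, u j ≠ 0)
    (hF : Tendsto (fun j => (∫ x, (φ x - φ (x - u j)) ^ 2 ∂μ) / ‖u j‖ ^ 2) atTop (𝓝 0)) :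
    ∃ c ≠ 0, Periodic φ c := by
  obtain ⟨w, -, σ, hσ, hw⟩ := hK.tendsto_subseq huK
  have hFσ := hF.comp hσ.tendsto_atTop
  by_cases hw0 : w = 0
  · subst hw0
    have hdir : ∀ j, ‖u (σ j)‖⁻¹ • u (σ j) ∈ sphere (0 : E) 1 := fun j => by
      rw [mem_sphere_zero_iff_norm, norm_smul, norm_inv, norm_norm,
        inv_mul_cancel₀ (norm_ne_zero_iff.2 (hu0 _))]
    obtain ⟨e, he, τ, hτ, hτe⟩ := (isCompact_sphere (0 : E) 1).tendsto_subseq hdir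
    exact ⟨e, ne_zero_of_mem_unit_sphere ⟨e, he⟩,
      periodic_of_fderiv_apply_eq_zero (hφ.differentiable one_ne_zero)
        (fderiv_apply_eq_zero_of_tendsto hφ hφ2 (hw.comp hτ.tendsto_atTop) hτe
          (hFσ.comp hτ.tendsto_atTop))⟩
  · refine ⟨-w, neg_ne_zero.2 hw0, periodic_neg_of_tendsto_integral_sq_sub_comp_sub
      hφ.continuous hφ2 hw ?_⟩
    have h := hFσ.mul (((continuous_norm.tendsto w).comp hw).pow 2)
    rw [zero_mul] at h
    exact h.congr fun j => div_mul_cancel₀ _ (pow_ne_zero 2 (norm_ne_zero_iff.2 (hu0 (σ j))))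

theorem exists_pos_mul_norm_sq_le_integral_sq_sub_comp_sub {φ : E → ℝ} (hφ : ContDiff ℝ 1 φ)
    (hφ2 : MemLp φ 2 μ) (hφ0 : φ ≠ 0) {K : Set E} (hK : IsCompact K) :
    ∃ κ > 0, ∀ ν ∈ K, κ * ‖ν‖ ^ 2 ≤ ∫ x, (φ x - φ (x - ν)) ^ 2 ∂μ := by
  by_contra! h
  choose u huK hu using fun j : ℕ => h (1 / (j + 1)) Nat.one_div_pos_of_nat
  have hF0 : ∀ j, 0 ≤ ∫ x, (φ x - φ (x - u j)) ^ 2 ∂μ :=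
    fun j => integral_nonneg fun x => sq_nonneg _
  have hu0 : ∀ j, u j ≠ 0 := fun j h0 => by
    simpa [h0] using (hF0 j).trans_lt (hu j)
  have hF : Tendsto (fun j => (∫ x, (φ x - φ (x - u j)) ^ 2 ∂μ) / ‖u j‖ ^ 2) atTop (𝓝 0) :=
    squeeze_zero (fun j => div_nonneg (hF0 j) (sq_nonneg _))
      (fun j => (div_le_iff₀ (by positivity [hu0 j])).2 (hu j).le)
      tendsto_one_div_add_atTop_nhds_zero_nat
  obtain ⟨c, hc, hper⟩ := exists_ne_zero_periodic_of_tendsto hφ hφ2 hK huK hu0 hF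
  exact hφ0 (hper.eq_zero_of_memLp_two hc hφ.continuous hφ2)

end Shifts

theorem isCompact_setOf_forall_abs_le {ι : Type*} [Fintype ι] (M : ℝ) :
    IsCompact {ν : EuclideanSpace ℝ ι | ∀ j, |ν j| ≤ M} := by
  have h : {ν : EuclideanSpace ℝ ι | ∀ j, |ν j| ≤ M} =
      EuclideanSpace.equiv ι ℝ ⁻¹' Set.Icc (fun _ => -M) fun _ => M := by
    ext ν
    simp [abs_le, Pi.le_def, forall_and]
  rw [h]
  exact ((EuclideanSpace.equiv ι ℝ).toHomeomorph.isCompact_preimage).2 isCompact_Icc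

theorem shift_l2_comparison_general (d : ℕ) (M : ℝ)
    (φ : Eu d → ℝ) (hden : IsDensity φ) (hHS : HS φ) (hHL : HLipOn φ M) :
    ∃ κlow κhigh : ℝ, 0 < κlow ∧ κlow < κhigh ∧
      ∀ μ μ' : Eu d, (∀ j, |μ j - μ' j| ≤ M) →
        κlow * ‖μ - μ'‖ ^ 2 ≤ (∫ x, (φ (x - μ) - φ (x - μ')) ^ 2) ∧
        (∫ x, (φ (x - μ) - φ (x - μ')) ^ 2) ≤ κhigh * ‖μ - μ'‖ ^ 2 := by
  obtain ⟨g, hg2, hgLip, -⟩ := hHL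
  have hφ0 : φ ≠ 0 := by
    rintro rfl
    simpa using hden.2.2
  obtain ⟨κ, hκ, hlow⟩ := exists_pos_mul_norm_sq_le_integral_sq_sub_comp_sub
    (hHS.1.of_le (by norm_num)) hHS.2 hφ0 (isCompact_setOf_forall_abs_le M)
  have hG : 0 ≤ ∫ x, g x ^ 2 := integral_nonneg fun x => sq_nonneg _
  refine ⟨κ, 2 * κ + ∫ x, g x ^ 2, hκ, by linarith, fun μ μ' hbox => ?_⟩
  have hν : ∀ j, |(μ' - μ) j| ≤ M := fun j => by simpa [abs_sub_comm] using hbox j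
  have hshift : ∫ x, (φ (x - μ) - φ (x - μ')) ^ 2 = ∫ x, (φ x - φ (x - (μ' - μ))) ^ 2 := by
    rw [← integral_sub_right_eq_self (fun x => (φ x - φ (x - (μ' - μ))) ^ 2) μ]
    simp_rw [sub_sub, add_sub_cancel]
  rw [hshift, ← norm_neg (μ - μ'), neg_sub]
  refine ⟨hlow _ hν, (integral_sq_sub_comp_sub_le hg2.integrable_sq fun x => hgLip x _ hν).trans ?_⟩
  nlinarith [sq_nonneg ‖μ' - μ‖]

/-- Two-sided comparison between `‖φ_μ - φ_μ̃‖₂²` and `‖μ - μ̃‖²`. -/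
theorem shift_l2_comparison (d : ℕ) (hd : 1 ≤ d) (M : ℝ) (hM : 0 < M)
    (φ : Eu d → ℝ) (hden : IsDensity φ) (hHS : HS φ) (hHL : HLipOn φ M) :
    ∃ κlow κhigh : ℝ, 0 < κlow ∧ κlow < κhigh ∧
      ∀ μ μ' : Eu d, (∀ j, |μ j - μ' j| ≤ M) →
        κlow * ‖μ - μ'‖ ^ 2 ≤ (∫ x, (φ (x - μ) - φ (x - μ')) ^ 2) ∧
        (∫ x, (φ (x - μ) - φ (x - μ')) ^ 2) ≤ κhigh * ‖μ - μ'‖ ^ 2 :=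
  shift_l2_comparison_general d M φ hden hHS hHL
end
end

section
/- Let φ be a probability density on ℝ^d satisfying (H_S) and satisfying (H_Lip) on [−M',M']^d for every M' > 0, and normalized so that ‖φ‖₂ = 1. Then there exists a constant c > 0 such that for all a, b ∈ ℝ^d: |⟨φ − φ_a, φ_{a+b} − φ_a⟩| ≤ ‖φ − φ_a‖₂ · ‖φ_{a+b} − φ_a‖₂ · (1 − c ‖φ − φ_{a+b}‖₂²) (a quantitative refinement of the Cauchy–Schwarz inequality in the location model). -/
open MeasureTheory ENNReal

noncomputable section

/-! The functions `φ`, `φ_a`, `φ_{a+b}` are unit vectors of `L²`, so the claim concerns a triangle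
`x y z` inscribed in the unit sphere of a real inner product space. The plane through `x, y, z`
meets the sphere in a circle of radius `ρ ≤ 1`, and by the law of sines
`‖x - z‖ = 2ρ sin ∠xyz`; hence `cos² ∠xyz ≤ 1 - ‖x - z‖² / 4`, and since `‖x - z‖ ≤ 2` this gives
`|cos ∠xyz| ≤ 1 - ‖x - z‖² / 8`, i.e. `c = 1/8`. Algebraically, the bound on `cos²` is the
nonnegativity of the Gram determinant of `y, x - y, z - y`. -/

open scoped RealInnerProductSpace

section InscribedAngle

variable {E : Type*} [NormedAddCommGroup E] [InnerProductSpace ℝ E]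

theorem two_inner_sub_eq_neg_norm_sub_sq {x y : E} (h : ‖x‖ = ‖y‖) :
    2 * ⟪y, x - y⟫ = -‖x - y‖ ^ 2 := by
  have := norm_add_sq_real y (x - y)
  rw [add_sub_cancel, h] at this
  linarith

theorem inner_sub_sub_sq_le_of_norm_eq {x y z : E} (hx : ‖x‖ = ‖y‖) (hz : ‖z‖ = ‖y‖) :
    4 * ‖y‖ ^ 2 * ⟪x - y, z - y⟫ ^ 2 ≤
      ‖x - y‖ ^ 2 * ‖z - y‖ ^ 2 * (4 * ‖y‖ ^ 2 - ‖x - z‖ ^ 2) := by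
  have hyp := two_inner_sub_eq_neg_norm_sub_sq hx
  have hyq := two_inner_sub_eq_neg_norm_sub_sq hz
  have hcs_pq := real_inner_mul_inner_self_le (x - y) (z - y)
  have hT : 0 ≤ ‖x - y‖ ^ 2 - 2 * ⟪x - y, z - y⟫ + ‖z - y‖ ^ 2 := by
    rw [← norm_sub_sq_real]; positivity
  have hPQ : 0 ≤ ‖x - y‖ ^ 2 * ‖z - y‖ ^ 2 := by positivity
  rw [show x - z = (x - y) - (z - y) by abel, norm_sub_sq_real (x - y)]
  generalize x - y = p, z - y = q at *
  have hqp := real_inner_comm p q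
  have hpp := real_inner_self_eq_norm_sq p
  have hqq := real_inner_self_eq_norm_sq q
  rw [hpp, hqq] at hcs_pq
  generalize ‖p‖ ^ 2 = P, ‖q‖ ^ 2 = Q, hG : ⟪p, q⟫ = G at *
  -- `v` is, up to a scalar factor, the orthogonal projection of `y` onto the span of `p` and `q`.
  set v := (Q * (P - G)) • p + (P * (Q - G)) • q
  have hyv : ⟪y, v⟫ = -(P * Q * (P + Q - 2 * G)) / 2 := by
    simp only [v, inner_add_right, real_inner_smul_right]
    linear_combination (Q * (P - G) / 2) * hyp + (P * (Q - G) / 2) * hyq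
  have hvv : ⟪v, v⟫ = P * Q * (P + Q - 2 * G) * (P * Q - G ^ 2) := by
    simp only [v, inner_add_left, inner_add_right, real_inner_smul_left, real_inner_smul_right,
      hpp, hqq, hG, hqp]
    ring
  have hcs := real_inner_mul_inner_self_le y v
  rw [hyv, hvv, real_inner_self_eq_norm_sq] at hcs
  have hr : 0 ≤ ‖y‖ ^ 2 := by positivity
  rcases (mul_nonneg hPQ hT).eq_or_lt with hK | hK
  · nlinarith [mul_le_mul_of_nonneg_left hcs_pq hr]
  · have : P * Q * (P - 2 * G + Q) ≤ 4 * ‖y‖ ^ 2 * (P * Q - G ^ 2) := by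
      refine le_of_mul_le_mul_left ?_ hK
      nlinarith
    nlinarith

theorem abs_inner_sub_sub_le_of_norm_eq_one {x y z : E} (hx : ‖x‖ = 1) (hy : ‖y‖ = 1)
    (hz : ‖z‖ = 1) :
    |⟪x - y, z - y⟫| ≤ ‖x - y‖ * ‖z - y‖ * (1 - ‖x - z‖ ^ 2 / 8) := by
  have h := inner_sub_sub_sq_le_of_norm_eq (hx.trans hy.symm) (hz.trans hy.symm)
  have hxz : ‖x - z‖ ≤ 2 := (norm_sub_le x z).trans (by rw [hx, hz]; norm_num)
  have hc : 0 ≤ 1 - ‖x - z‖ ^ 2 / 8 := by nlinarith [norm_nonneg (x - z)]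
  rw [hy] at h
  refine abs_le_of_sq_le_sq ?_ (by positivity)
  calc ⟪x - y, z - y⟫ ^ 2 ≤ ‖x - y‖ ^ 2 * ‖z - y‖ ^ 2 * (1 - ‖x - z‖ ^ 2 / 4) := by linarith
    _ ≤ ‖x - y‖ ^ 2 * ‖z - y‖ ^ 2 * (1 - ‖x - z‖ ^ 2 / 8) ^ 2 := by
      gcongr
      nlinarith [sq_nonneg (‖x - z‖ ^ 2)]
    _ = (‖x - y‖ * ‖z - y‖ * (1 - ‖x - z‖ ^ 2 / 8)) ^ 2 := by ring

end InscribedAngle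

namespace MeasureTheory.MemLp

variable {α : Type*} [MeasurableSpace α] {μ : Measure α} {f g : α → ℝ}

theorem inner_toLp_eq_integral_mul (hf : MemLp f 2 μ) (hg : MemLp g 2 μ) :
    ⟪hf.toLp f, hg.toLp g⟫ = ∫ x, f x * g x ∂μ := by
  rw [L2.inner_def]
  refine integral_congr_ae ?_
  filter_upwards [hf.coeFn_toLp, hg.coeFn_toLp] with x hfx hgx
  simp [hfx, hgx, mul_comm]

theorem norm_toLp_eq_sqrt_integral_sq (hf : MemLp f 2 μ) :
    ‖hf.toLp f‖ = √(∫ x, f x ^ 2 ∂μ) := by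
  simp_rw [sq, ← hf.inner_toLp_eq_integral_mul hf, real_inner_self_eq_norm_sq,
    Real.sqrt_sq (norm_nonneg _)]

end MeasureTheory.MemLp

theorem cauchy_schwarz_refinement_general (d : ℕ)
    (φ : Eu d → ℝ) (hHS : HS φ)
    (hnorm : ∫ x, (φ x) ^ 2 = 1) :
    ∃ c : ℝ, 0 < c ∧
      ∀ a b : Eu d,
        |∫ x, (φ x - φ (x - a)) * (φ (x - (a + b)) - φ (x - a))| ≤
          Real.sqrt (∫ x, (φ x - φ (x - a)) ^ 2) *
            Real.sqrt (∫ x, (φ (x - (a + b)) - φ (x - a)) ^ 2) *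
            (1 - c * ∫ x, (φ x - φ (x - (a + b))) ^ 2) := by
  have hφ : MemLp φ 2 volume := hHS.2
  have hshift (μ : Eu d) : MemLp (fun x => φ (x - μ)) 2 volume :=
    hφ.comp_measurePreserving (measurePreserving_sub_right volume μ)
  have hφ_one : ‖hφ.toLp φ‖ = 1 := by
    rw [hφ.norm_toLp_eq_sqrt_integral_sq, hnorm, Real.sqrt_one]
  have hshift_one (μ : Eu d) : ‖(hshift μ).toLp _‖ = 1 := by
    rw [(hshift μ).norm_toLp_eq_sqrt_integral_sq, integral_sub_right_eq_self (fun x => φ x ^ 2),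
      hnorm, Real.sqrt_one]
  refine ⟨1 / 8, by norm_num, fun a b => ?_⟩
  have key := abs_inner_sub_sub_le_of_norm_eq_one hφ_one (hshift_one a) (hshift_one (a + b))
  rw [← MemLp.toLp_sub, ← MemLp.toLp_sub, ← MemLp.toLp_sub, MemLp.inner_toLp_eq_integral_mul,
    MemLp.norm_toLp_eq_sqrt_integral_sq, MemLp.norm_toLp_eq_sqrt_integral_sq,
    MemLp.norm_toLp_eq_sqrt_integral_sq, Real.sq_sqrt (integral_nonneg fun _ => sq_nonneg _)] at key
  simp only [Pi.sub_apply] at key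
  rwa [one_div_mul_eq_div]

/-- Refinement of the Cauchy–Schwarz inequality in the location model:
`|⟨φ - φ_a, φ_{a+b} - φ_a⟩| ≤ ‖φ - φ_a‖₂ ‖φ_{a+b} - φ_a‖₂ (1 - c‖φ - φ_{a+b}‖₂²)`. -/
theorem cauchy_schwarz_refinement (d : ℕ) (hd : 1 ≤ d)
    (φ : Eu d → ℝ) (hden : IsDensity φ) (hHS : HS φ)
    (hHL : ∀ M' > (0 : ℝ), HLipOn φ M')
    (hnorm : ∫ x, (φ x) ^ 2 = 1) :
    ∃ c : ℝ, 0 < c ∧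
      ∀ a b : Eu d,
        |∫ x, (φ x - φ (x - a)) * (φ (x - (a + b)) - φ (x - a))| ≤
          Real.sqrt (∫ x, (φ x - φ (x - a)) ^ 2) *
            Real.sqrt (∫ x, (φ (x - (a + b)) - φ (x - a)) ^ 2) *
            (1 - c * ∫ x, (φ x - φ (x - (a + b))) ^ 2) :=
  cauchy_schwarz_refinement_general d φ hHS hnorm
end
end

section
/- Let 0 ≤ λ ≤ λ' ≤ 1 and μ, μ' ∈ ℝ^d. Then the infimum over q ∈ [max(λ+λ'−1, 0), λ] of (λ'−q)‖μ'‖² + (λ−q)‖μ‖² + q‖μ−μ'‖² equals: (λ'−λ)‖μ'‖² + λ‖μ−μ'‖² if ‖μ‖² + ‖μ'‖² ≥ ‖μ−μ'‖²; λ‖μ‖² + λ'‖μ'‖² if ‖μ‖² + ‖μ'‖² < ‖μ−μ'‖² and λ + λ' ≤ 1; and (1−λ')‖μ‖² + (1−λ)‖μ'‖² + (λ+λ'−1)‖μ−μ'‖² if ‖μ‖² + ‖μ'‖² < ‖μ−μ'‖² and λ + λ' > 1. In particular, in all cases this infimum is at most (λ'−λ)‖μ'‖² + λ‖μ−μ'‖².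 -/
noncomputable section

/-- The set of transportation costs between the mixing distributions
`(1-λ)δ₀ + λδ_μ` and `(1-λ')δ₀ + λ'δ_{μ'}`, parametrized by the mass `q`
transported from `μ` to `μ'`. -/
def transportCosts {d : ℕ} (l l' : ℝ) (μ μ' : EuclideanSpace ℝ (Fin d)) : Set ℝ :=
  {r | ∃ q : ℝ, max (l + l' - 1) 0 ≤ q ∧ q ≤ l ∧
    r = (l' - q) * ‖μ'‖ ^ 2 + (l - q) * ‖μ‖ ^ 2 + q * ‖μ - μ'‖ ^ 2}

lemma tc_least {d : ℕ} (l l' : ℝ) (μ μ' : EuclideanSpace ℝ (Fin d)) (q0 : ℝ)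
    (h1 : max (l + l' - 1) 0 ≤ q0) (h2 : q0 ≤ l)
    (hmin : ∀ q, max (l + l' - 1) 0 ≤ q → q ≤ l →
      (l' - q0) * ‖μ'‖ ^ 2 + (l - q0) * ‖μ‖ ^ 2 + q0 * ‖μ - μ'‖ ^ 2 ≤
      (l' - q) * ‖μ'‖ ^ 2 + (l - q) * ‖μ‖ ^ 2 + q * ‖μ - μ'‖ ^ 2) :
    sInf (transportCosts l l' μ μ') =
      (l' - q0) * ‖μ'‖ ^ 2 + (l - q0) * ‖μ‖ ^ 2 + q0 * ‖μ - μ'‖ ^ 2 := by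
  apply IsLeast.csInf_eq
  exact ⟨⟨q0, h1, h2, rfl⟩, by rintro r ⟨q, hq1, hq2, rfl⟩; exact hmin q hq1 hq2⟩

/-- Explicit computation of the squared `L²`-Wasserstein distance between
two-point mixing distributions, and the resulting upper bound. -/
theorem W2sq_formula {d : ℕ} (l l' : ℝ) (hl : 0 ≤ l) (hll' : l ≤ l') (hl' : l' ≤ 1)
    (μ μ' : EuclideanSpace ℝ (Fin d)) :
    (‖μ‖ ^ 2 + ‖μ'‖ ^ 2 ≥ ‖μ - μ'‖ ^ 2 →
      sInf (transportCosts l l' μ μ') = (l' - l) * ‖μ'‖ ^ 2 + l * ‖μ - μ'‖ ^ 2) ∧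
    (‖μ‖ ^ 2 + ‖μ'‖ ^ 2 < ‖μ - μ'‖ ^ 2 → l + l' ≤ 1 →
      sInf (transportCosts l l' μ μ') = l * ‖μ‖ ^ 2 + l' * ‖μ'‖ ^ 2) ∧
    (‖μ‖ ^ 2 + ‖μ'‖ ^ 2 < ‖μ - μ'‖ ^ 2 → 1 < l + l' →
      sInf (transportCosts l l' μ μ') =
        (1 - l') * ‖μ‖ ^ 2 + (1 - l) * ‖μ'‖ ^ 2 + (l + l' - 1) * ‖μ - μ'‖ ^ 2) ∧
    sInf (transportCosts l l' μ μ') ≤ (l' - l) * ‖μ'‖ ^ 2 + l * ‖μ - μ'‖ ^ 2 := by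
  have hal : max (l + l' - 1) 0 ≤ l := by
    apply max_le <;> linarith
  have h1 : ‖μ‖ ^ 2 + ‖μ'‖ ^ 2 ≥ ‖μ - μ'‖ ^ 2 →
      sInf (transportCosts l l' μ μ') = (l' - l) * ‖μ'‖ ^ 2 + l * ‖μ - μ'‖ ^ 2 := by
    intro h
    rw [tc_least l l' μ μ' l hal le_rfl]
    · ring
    · intro q hq1 hq2
      have hq1' : 0 ≤ q := le_trans (le_max_right _ _) hq1
      nlinarith
  have h2 : ‖μ‖ ^ 2 + ‖μ'‖ ^ 2 < ‖μ - μ'‖ ^ 2 → l + l' ≤ 1 →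
      sInf (transportCosts l l' μ μ') = l * ‖μ‖ ^ 2 + l' * ‖μ'‖ ^ 2 := by
    intro h hsum
    rw [tc_least l l' μ μ' 0 (by apply max_le <;> linarith) hl]
    · ring
    · intro q hq1 hq2
      have hq1' : 0 ≤ q := le_trans (le_max_right _ _) hq1
      nlinarith
  have h3 : ‖μ‖ ^ 2 + ‖μ'‖ ^ 2 < ‖μ - μ'‖ ^ 2 → 1 < l + l' →
      sInf (transportCosts l l' μ μ') =
        (1 - l') * ‖μ‖ ^ 2 + (1 - l) * ‖μ'‖ ^ 2 + (l + l' - 1) * ‖μ - μ'‖ ^ 2 := by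
    intro h hsum
    rw [tc_least l l' μ μ' (l + l' - 1) (max_le le_rfl (by linarith)) (by linarith)]
    · ring
    · intro q hq1 hq2
      have hq1' : l + l' - 1 ≤ q := le_trans (le_max_left _ _) hq1
      nlinarith
  refine ⟨h1, h2, h3, ?_⟩
  have hmem : (l' - l) * ‖μ'‖ ^ 2 + l * ‖μ - μ'‖ ^ 2 ∈ transportCosts l l' μ μ' :=
    ⟨l, hal, le_rfl, by ring⟩
  have hbdd : BddBelow (transportCosts l l' μ μ') := by
    refine ⟨0, ?_⟩
    rintro r ⟨q, hq1, hq2, rfl⟩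
    have hq1' : 0 ≤ q := le_trans (le_max_right _ _) hq1
    have h1 : 0 ≤ ‖μ‖ ^ 2 := by positivity
    have h2 : 0 ≤ ‖μ'‖ ^ 2 := by positivity
    have h3 : 0 ≤ ‖μ - μ'‖ ^ 2 := by positivity
    nlinarith
  exact csInf_le hbdd hmem
end
end
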